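/- Let n ≥ 5 be an integer, and set n_x := ⌈n/2⌉, n_y := ⌈n/4⌉, u_i^x := 1/2 if i ≤ n_x and u_i^x := 1 otherwise, u_i^y := 1/2 if i ≤ n_y and u_i^y := 1 otherwise. Consider the feasible set of the SDP relaxation (SDP2) augmented with the scaled first-level RLT inequalities: all (x, y, X, Y, γ) with x, y ∈ [0,1]^n, X, Y real symmetric n×n matrices, X − x xᵀ and Y − y yᵀ positive semidefinite, X_{ii} ≤ x_i/2 for i ≤ n_x and X_{ii} ≤ x_i for i > n_x, Y_{ii} ≤ y_i/2 for i ≤ n_y and Y_{ii} ≤ y_i for i > n_y, X_{ii} − 2X_{ij} + X_{jj} + Y_{ii} − 2Y_{ij} + Y_{jj} ≥ γ for all 1 ≤ i < j ≤ n, and additionally, for all 1 ≤ i < j ≤ n: X_{ij} ≥ 0, X_{ij} ≥ u_j^x x_i + u_i^x x_j − u_i^x u_j^x, Y_{ij} ≥ 0, Y_{ij} ≥ u_j^y y_i + u_i^y y_j − u_i^y u_j^y. Then the maximum value of γ over this augmented set is still attained and equals (1/4)(1 + 1/⌊(n−1)/4⌋); i.e., adding the first-level RLT constraints does not improve the bound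 given by (SDP2). -/

import Mathlib

/-!
Let `m = ⌊(n-1)/4⌋ + 1`; on the first `m` indices both scalings equal `1/2`. Summing the pair
constraints over these indices gives `m(m-1)γ ≤ 2m·tr X_S - 2·𝟙ᵀX_S𝟙 + (same for Y)`. With
`s = ∑_S x_i`, the diagonal bound gives `tr X_S ≤ s/2` and `X ⪰ xxᵀ` gives `𝟙ᵀX_S𝟙 ≥ s²`, so each
part is at most `ms - 2s² ≤ m²/8`, whence `γ ≤ m / (4(m-1))`.

The value is attained at `x = uˣ/2`, `y = uʸ/2`, `X = xxᵀ + Diag(x²) + B(Diag 𝟙_S - 𝟙_S𝟙_Sᵀ)`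
(and likewise `Y`) with `S` the first `m` indices and `B = 1/(16(m-1))`: every diagonal bound is
tight, the right-hand sides of the scaled RLT inequalities vanish, and the pairs inside `S` attain
the bound exactly.
-/

open Matrix Finset

section UpperBound

variable {ι : Type*} [Fintype ι]

theorem sq_sum_le_sum_sum_of_posSemidef_sub_vecMulVec {X : Matrix ι ι ℝ} {x : ι → ℝ}
    (hX : (X - vecMulVec x x).PosSemidef) : (∑ i, x i) ^ 2 ≤ ∑ i, ∑ j, X i j := by
  have h := hX.dotProduct_mulVec_nonneg 1
  simp only [star_trivial, dotProduct, mulVec, Pi.one_apply, one_mul, mul_one, Matrix.sub_apply,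
    vecMulVec_apply, Finset.sum_sub_distrib, ← Finset.sum_mul_sum] at h
  linarith

theorem sum_sum_sqDist_le {X : Matrix ι ι ℝ} {x : ι → ℝ} {c : ℝ}
    (hX : (X - vecMulVec x x).PosSemidef) (hdiag : ∀ i, X i i ≤ c * x i) :
    ∑ i, ∑ j, (X i i - 2 * X i j + X j j) ≤ (Fintype.card ι : ℝ) ^ 2 * c ^ 2 / 2 := by
  set m : ℝ := (Fintype.card ι : ℝ)
  have hsum : ∑ i, ∑ j, (X i i - 2 * X i j + X j j) =
      2 * m * ∑ i, X i i - 2 * ∑ i, ∑ j, X i j := by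
    simp only [Finset.sum_add_distrib, Finset.sum_sub_distrib, Finset.sum_const,
      ← Finset.mul_sum, Finset.card_univ, nsmul_eq_mul, m]
    ring
  have htrace : ∑ i, X i i ≤ c * ∑ i, x i := by
    rw [Finset.mul_sum]
    exact Finset.sum_le_sum fun i _ => hdiag i
  have hm : 0 ≤ m := Nat.cast_nonneg _
  rw [hsum]
  nlinarith [sq_sum_le_sum_sum_of_posSemidef_sub_vecMulVec hX,
    mul_le_mul_of_nonneg_left htrace hm, sq_nonneg (m * c - 2 * ∑ i, x i)]

theorem card_mul_card_sub_one_mul_le_sum_sum [DecidableEq ι] {f : ι → ι → ℝ} {γ : ℝ}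
    (hdiag : ∀ i, f i i = 0) (hoff : ∀ i j, i ≠ j → γ ≤ f i j) :
    (Fintype.card ι : ℝ) * (Fintype.card ι - 1) * γ ≤ ∑ i, ∑ j, f i j := by
  have hrow (i : ι) : ((Fintype.card ι : ℝ) - 1) * γ ≤ ∑ j, f i j := by
    have : Nonempty ι := ⟨i⟩
    rw [← Finset.sum_erase _ (hdiag i)]
    have := Finset.card_nsmul_le_sum (univ.erase i) (f i) γ fun j hj =>
      hoff i j (Finset.ne_of_mem_erase hj).symm
    rwa [nsmul_eq_mul, Finset.card_erase_of_mem (Finset.mem_univ i), Finset.card_univ,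
      Nat.cast_pred Fintype.card_pos] at this
  calc (Fintype.card ι : ℝ) * (Fintype.card ι - 1) * γ
      = ∑ _i : ι, ((Fintype.card ι : ℝ) - 1) * γ := by simp [mul_assoc]
    _ ≤ ∑ i, ∑ j, f i j := Finset.sum_le_sum fun i _ => hrow i

theorem le_quarter_mul_one_add_inv_of_sqDist_le [LinearOrder ι]
    {X Y : Matrix ι ι ℝ} {x y : ι → ℝ} {γ : ℝ} {k : ℕ}
    (hcard : Fintype.card ι = k + 1) (hk : 0 < k) (hXs : X.IsSymm) (hYs : Y.IsSymm)
    (hX : (X - vecMulVec x x).PosSemidef) (hY : (Y - vecMulVec y y).PosSemidef)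
    (hXd : ∀ i, X i i ≤ x i / 2) (hYd : ∀ i, Y i i ≤ y i / 2)
    (hγ : ∀ i j, i < j → γ ≤ X i i - 2 * X i j + X j j + Y i i - 2 * Y i j + Y j j) :
    γ ≤ 1 / 4 * (1 + 1 / k) := by
  have hne (i j : ι) (h : i ≠ j) :
      γ ≤ (X i i - 2 * X i j + X j j) + (Y i i - 2 * Y i j + Y j j) := by
    rcases h.lt_or_gt with h | h
    · linarith [hγ i j h]
    · linarith [hγ j i h, hXs.apply i j, hYs.apply i j]
  have hpairs := card_mul_card_sub_one_mul_le_sum_sum (fun i => by ring) hne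
  have hXsum := sum_sum_sqDist_le hX (c := 1 / 2) fun i => (hXd i).trans_eq (by ring)
  have hYsum := sum_sum_sqDist_le hY (c := 1 / 2) fun i => (hYd i).trans_eq (by ring)
  simp only [Finset.sum_add_distrib, hcard, Nat.cast_add, Nat.cast_one, add_sub_cancel_right]
    at hpairs hXsum hYsum
  have hk' : (0 : ℝ) < k := Nat.cast_pos.mpr hk
  rw [show 1 / 4 * (1 + 1 / (k : ℝ)) = (k + 1) ^ 2 / 4 / ((k + 1) * k) by field_simp,
    le_div_iff₀ (by positivity)]
  linarith

end UpperBound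

section Witness

variable {ι : Type*} [DecidableEq ι] (S : Finset ι) (B : ℝ) (x : ι → ℝ)

theorem posSemidef_card_smul_diagonal_sub_vecMulVec_indicator [Fintype ι] :
    ((#S : ℝ) • diagonal ((S : Set ι).indicator 1) -
      vecMulVec ((S : Set ι).indicator (1 : ι → ℝ)) ((S : Set ι).indicator 1)).PosSemidef := by
  refine .of_dotProduct_mulVec_nonneg ?_ fun v => ?_
  · ext i j
    by_cases h : i = j
    · simp [h]
    · simp [h, Ne.symm h, vecMulVec_apply, mul_comm]
  · have hD : v ⬝ᵥ (diagonal ((S : Set ι).indicator 1) *ᵥ v) = ∑ i ∈ S, v i ^ 2 := by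
      simp [mulVec_diagonal, dotProduct, Set.indicator_apply, sq]
    have hS : v ⬝ᵥ (S : Set ι).indicator 1 = ∑ i ∈ S, v i := by
      simp [dotProduct, Set.indicator_apply]
    simp only [star_trivial, sub_mulVec, smul_mulVec, vecMulVec_mulVec, dotProduct_sub,
      dotProduct_smul, hD, smul_eq_mul, dotProduct_comm _ v, hS, MulOpposite.smul_eq_mul_unop,
      MulOpposite.unop_op, sub_nonneg]
    nlinarith [sq_sum_le_card_mul_sum_sq (s := S) (f := v)]

noncomputable def sdpWitness : Matrix ι ι ℝ :=
  vecMulVec x x + diagonal (fun i => x i ^ 2) +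
    B • (diagonal ((S : Set ι).indicator 1) -
      vecMulVec ((S : Set ι).indicator 1) ((S : Set ι).indicator 1))

variable {S B x}

theorem sdpWitness_apply_self (i : ι) : sdpWitness S B x i i = 2 * x i ^ 2 := by
  by_cases hi : i ∈ S <;> simp [sdpWitness, vecMulVec_apply, hi] <;> ring

theorem sdpWitness_apply_of_ne {i j : ι} (h : i ≠ j) :
    sdpWitness S B x i j = x i * x j - if i ∈ S ∧ j ∈ S then B else 0 := by
  by_cases hi : i ∈ S <;> by_cases hj : j ∈ S <;>
    simp [sdpWitness, vecMulVec_apply, h, hi, hj, sub_eq_add_neg]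

theorem isSymm_sdpWitness : (sdpWitness S B x).IsSymm := by
  ext i j
  by_cases h : i = j
  · subst h; rfl
  · rw [transpose_apply, sdpWitness_apply_of_ne h, sdpWitness_apply_of_ne (Ne.symm h)]
    simp only [mul_comm, and_comm]

theorem posSemidef_sdpWitness_sub_vecMulVec [Fintype ι] (hB : 0 ≤ B)
    (hx : ∀ i ∈ S, B * (#S - 1) ≤ x i ^ 2) :
    (sdpWitness S B x - vecMulVec x x).PosSemidef := by
  have hdecomp : sdpWitness S B x - vecMulVec x x =
      diagonal (fun i => x i ^ 2 - B * (#S - 1) * (S : Set ι).indicator 1 i) +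
        B • ((#S : ℝ) • diagonal ((S : Set ι).indicator 1) -
          vecMulVec ((S : Set ι).indicator 1) ((S : Set ι).indicator 1)) := by
    ext i j
    by_cases h : i = j
    · subst h
      by_cases hi : i ∈ S <;> simp [sdpWitness, vecMulVec_apply, Set.indicator_apply, hi]
    · simp [sdpWitness, vecMulVec_apply, Set.indicator_apply, h]
  rw [hdecomp]
  refine .add (.diagonal fun i => ?_)
    ((posSemidef_card_smul_diagonal_sub_vecMulVec_indicator S).smul hB)
  by_cases hi : i ∈ S
  · simpa [hi] using hx i hi
  · simpa [hi] using sq_nonneg (x i)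

theorem sdpWitness_nonneg_of_ne {i j : ι} (h : i ≠ j) (hB : 0 ≤ B) (hBx : B ≤ x i * x j) :
    0 ≤ sdpWitness S B x i j := by
  rw [sdpWitness_apply_of_ne h]
  split_ifs <;> linarith

theorem sdpWitness_sqDist {i j : ι} (h : i ≠ j) :
    sdpWitness S B x i i - 2 * sdpWitness S B x i j + sdpWitness S B x j j =
      x i ^ 2 + x j ^ 2 + (x i - x j) ^ 2 + if i ∈ S ∧ j ∈ S then 2 * B else 0 := by
  rw [sdpWitness_apply_self, sdpWitness_apply_self, sdpWitness_apply_of_ne h]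
  split_ifs <;> ring

theorem le_sdpWitness_sqDist_add {y : ι → ℝ} {i j : ι} (h : i ≠ j) (hB : B ≤ 1 / 16)
    (hx : ∀ i, 1 / 4 ≤ x i) (hxS : ∀ i ∈ S, x i = 1 / 4)
    (hy : ∀ i, y i = if i ∈ S then 1 / 4 else 1 / 2) :
    1 / 4 + 4 * B ≤ sdpWitness S B x i i - 2 * sdpWitness S B x i j + sdpWitness S B x j j +
      sdpWitness S B y i i - 2 * sdpWitness S B y i j + sdpWitness S B y j j := by
  have hX := sdpWitness_sqDist (S := S) (B := B) (x := x) h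
  have hY := sdpWitness_sqDist (S := S) (B := B) (x := y) h
  by_cases hi : i ∈ S <;> by_cases hj : j ∈ S <;>
    simp only [hi, hj, hy, hxS, and_true, and_false, if_true, if_false] at hX hY <;>
    norm_num at hY <;> nlinarith [hx i, hx j]

end Witness

def AugmentedSDP2Feasible {n : ℕ} (nx ny : ℕ) (ux uy : Fin n → ℝ) (γ : ℝ) : Prop :=
  ∃ (x y : Fin n → ℝ) (X Y : Matrix (Fin n) (Fin n) ℝ),
    (∀ i, 0 ≤ x i ∧ x i ≤ 1) ∧ (∀ i, 0 ≤ y i ∧ y i ≤ 1) ∧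
    X.IsSymm ∧ Y.IsSymm ∧
    (X - Matrix.vecMulVec x x).PosSemidef ∧
    (Y - Matrix.vecMulVec y y).PosSemidef ∧
    (∀ i : Fin n, ((i : ℕ) + 1 ≤ nx → X i i ≤ x i / 2) ∧
      (nx < (i : ℕ) + 1 → X i i ≤ x i)) ∧
    (∀ i : Fin n, ((i : ℕ) + 1 ≤ ny → Y i i ≤ y i / 2) ∧
      (ny < (i : ℕ) + 1 → Y i i ≤ y i)) ∧
    (∀ i j : Fin n, i < j →
      X i i - 2 * X i j + X j j + Y i i - 2 * Y i j + Y j j ≥ γ) ∧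
    (∀ i j : Fin n, i < j →
      X i j ≥ 0 ∧ X i j ≥ ux j * x i + ux i * x j - ux i * ux j ∧
      Y i j ≥ 0 ∧ Y i j ≥ uy j * y i + uy i * y j - uy i * uy j)

theorem AugmentedSDP2Feasible.le {n nx ny k : ℕ} {ux uy : Fin n → ℝ} {γ : ℝ}
    (hk : 0 < k) (hkn : k + 1 ≤ n) (hknx : k + 1 ≤ nx) (hkny : k + 1 ≤ ny)
    (h : AugmentedSDP2Feasible nx ny ux uy γ) : γ ≤ 1 / 4 * (1 + 1 / k) := by
  obtain ⟨x, y, X, Y, -, -, hXs, hYs, hX, hY, hXd, hYd, hγ, -⟩ := h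
  let e : Fin (k + 1) → Fin n := Fin.castLE hkn
  have he (i : Fin (k + 1)) : (e i : ℕ) + 1 ≤ k + 1 := by simp only [e, Fin.val_castLE]; omega
  have hsub {Z : Matrix (Fin n) (Fin n) ℝ} {z : Fin n → ℝ} (hZ : (Z - vecMulVec z z).PosSemidef) :
      (Z.submatrix e e - vecMulVec (z ∘ e) (z ∘ e)).PosSemidef := by
    convert hZ.submatrix e using 1
    ext i j
    simp [vecMulVec_apply]
  exact le_quarter_mul_one_add_inv_of_sqDist_le (Fintype.card_fin _) hk (hXs.submatrix e)
    (hYs.submatrix e) (hsub hX) (hsub hY) (fun i => (hXd (e i)).1 ((he i).trans hknx))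
    (fun i => (hYd (e i)).1 ((he i).trans hkny)) fun i j hij => hγ (e i) (e j) hij

theorem augmentedSDP2Feasible_sdpWitness {n nx ny k : ℕ} {ux uy : Fin n → ℝ}
    (hk : 0 < k) (hny : ny = k + 1) (hnynx : ny ≤ nx) (hnyn : ny ≤ n)
    (hux : ∀ i : Fin n, ux i = if (i : ℕ) + 1 ≤ nx then 1 / 2 else 1)
    (huy : ∀ i : Fin n, uy i = if (i : ℕ) + 1 ≤ ny then 1 / 2 else 1) :
    AugmentedSDP2Feasible nx ny ux uy (1 / 4 * (1 + 1 / k)) := by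
  set S : Finset (Fin n) := {i | (i : ℕ) < ny}
  set B : ℝ := 1 / (16 * k)
  have hk' : (0 : ℝ) < k := Nat.cast_pos.mpr hk
  have hB : 0 ≤ B := by positivity
  have hBk : B * k = 1 / 16 := by simp only [B]; field_simp
  have hB16 : B ≤ 1 / 16 := by nlinarith [(Nat.one_le_cast (α := ℝ)).mpr hk]
  have hvalue : 1 / 4 * (1 + 1 / (k : ℝ)) = 1 / 4 + 4 * B := by simp only [B]; field_simp; ring
  have hS : (#S : ℝ) - 1 = k := by
    rw [Fin.card_filter_val_lt, min_eq_right hnyn, hny]; push_cast; ring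
  have hmem (i : Fin n) : i ∈ S ↔ (i : ℕ) + 1 ≤ ny := by
    simp only [S, Finset.mem_filter, Finset.mem_univ, true_and]; omega
  have hx (i : Fin n) : 1 / 4 ≤ ux i / 2 ∧ ux i / 2 ≤ 1 / 2 := by
    rw [hux i]; split_ifs <;> norm_num
  have hxS : ∀ i ∈ S, ux i / 2 = 1 / 4 := fun i hi => by
    rw [hux i, if_pos (((hmem i).mp hi).trans hnynx)]; norm_num
  have hy (i : Fin n) : uy i / 2 = if i ∈ S then 1 / 4 else 1 / 2 := by
    by_cases hi : (i : ℕ) + 1 ≤ ny <;> simp only [huy i, hmem, hi] <;> norm_num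
  have hyl (i : Fin n) : 1 / 4 ≤ uy i / 2 := by rw [hy i]; split_ifs <;> norm_num
  have hoff {v : Fin n → ℝ} (hv : ∀ i, 1 / 4 ≤ v i) {i j : Fin n} (hij : i ≠ j) :
      0 ≤ sdpWitness S B v i j :=
    sdpWitness_nonneg_of_ne hij hB (by nlinarith [hv i, hv j])
  refine ⟨fun i => ux i / 2, fun i => uy i / 2, sdpWitness S B _, sdpWitness S B _,
    fun i => ⟨by linarith [(hx i).1], by linarith [(hx i).2]⟩,
    fun i => ⟨by linarith [hyl i], by simp only [hy i]; split_ifs <;> norm_num⟩,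
    isSymm_sdpWitness, isSymm_sdpWitness,
    posSemidef_sdpWitness_sub_vecMulVec hB fun i hi => ?_,
    posSemidef_sdpWitness_sub_vecMulVec hB fun i hi => ?_,
    fun i => ⟨fun h => ?_, fun h => ?_⟩, fun i => ⟨fun h => ?_, fun h => ?_⟩,
    fun i j hij => ?_, fun i j hij => ?_⟩
  · rw [hS, hBk, hxS i hi]; norm_num
  · rw [hS, hBk, hy i, if_pos hi]; norm_num
  · simp only [sdpWitness_apply_self, hux i, if_pos h]; norm_num
  · simp only [sdpWitness_apply_self, hux i, if_neg (not_le.mpr h)]; norm_num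
  · simp only [sdpWitness_apply_self, huy i, if_pos h]; norm_num
  · simp only [sdpWitness_apply_self, huy i, if_neg (not_le.mpr h)]; norm_num
  · rw [ge_iff_le, hvalue]
    exact le_sdpWitness_sqDist_add hij.ne hB16 (fun i => (hx i).1) hxS hy
  · -- the right-hand sides of the scaled RLT inequalities vanish at `x = u / 2`
    have hX := hoff (fun i => (hx i).1) hij.ne
    have hY := hoff hyl hij.ne
    exact ⟨hX, by linarith, hY, by linarith⟩

/-- Adding the scaled first-level RLT inequalities to the SDP relaxation (SDP2) of the
circle packing problem does not improve the bound: the optimal value is still attained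
and equals `(1/4)(1 + 1/⌊(n-1)/4⌋)` for all `n ≥ 5`.  Here indices of `Fin n` are
0-based, so the 1-based condition `i ≤ n_x` reads `(i : ℕ) + 1 ≤ n_x`;
`n_x = ⌈n/2⌉ = (n+1)/2`, `n_y = ⌈n/4⌉ = (n+3)/4`, and `⌊(n-1)/4⌋ = (n-1)/4` in ℕ. -/
theorem stmt_11 (n : ℕ) (hn : 5 ≤ n)
    (nx ny : ℕ) (hnx : nx = (n + 1) / 2) (hny : ny = (n + 3) / 4)
    (ux uy : Fin n → ℝ)
    (hux : ∀ i : Fin n, ux i = if (i : ℕ) + 1 ≤ nx then 1/2 else 1)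
    (huy : ∀ i : Fin n, uy i = if (i : ℕ) + 1 ≤ ny then 1/2 else 1) :
    IsGreatest {γ : ℝ | ∃ (x y : Fin n → ℝ) (X Y : Matrix (Fin n) (Fin n) ℝ),
      (∀ i, 0 ≤ x i ∧ x i ≤ 1) ∧ (∀ i, 0 ≤ y i ∧ y i ≤ 1) ∧
      X.IsSymm ∧ Y.IsSymm ∧
      (X - Matrix.vecMulVec x x).PosSemidef ∧
      (Y - Matrix.vecMulVec y y).PosSemidef ∧
      (∀ i : Fin n, ((i : ℕ) + 1 ≤ nx → X i i ≤ x i / 2) ∧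
        (nx < (i : ℕ) + 1 → X i i ≤ x i)) ∧
      (∀ i : Fin n, ((i : ℕ) + 1 ≤ ny → Y i i ≤ y i / 2) ∧
        (ny < (i : ℕ) + 1 → Y i i ≤ y i)) ∧
      (∀ i j : Fin n, i < j →
        X i i - 2 * X i j + X j j + Y i i - 2 * Y i j + Y j j ≥ γ) ∧
      (∀ i j : Fin n, i < j →
        X i j ≥ 0 ∧ X i j ≥ ux j * x i + ux i * x j - ux i * ux j ∧
        Y i j ≥ 0 ∧ Y i j ≥ uy j * y i + uy i * y j - uy i * uy j)}
    ((1/4) * (1 + 1 / (((n - 1) / 4 : ℕ) : ℝ))) := by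
  have hk : 0 < (n - 1) / 4 := by omega
  have hny' : ny = (n - 1) / 4 + 1 := by omega
  exact ⟨augmentedSDP2Feasible_sdpWitness hk hny' (by omega) (by omega) hux huy,
    fun γ hγ => AugmentedSDP2Feasible.le hk (by omega) (by omega) (by omega) hγ⟩
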